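/- arXiv:math/0008020 — 2 statements merged into one kernel-verified Lean document; each statement's English description precedes it below -/
import Mathlib

section
/- Let s be a partition having a non-slippery step at 1. Then dirreach(s^{↓2}) = dirreach(s)^{↓2}. -/
/-!
Partitions are modelled as functions `s : ℕ → ℕ` (0-based: `s 0` is the first
part `s_1`), nonincreasing and eventually zero.  A paper index `i ≥ 1`
(columns, transitions `→_i`, increments `s^{↓i}`) corresponds to the Lean
index `i - 1`.
-/

/-- `s` is a partition: nonincreasing and eventually zero. -/
def IsPartition (s : ℕ → ℕ) : Prop :=
  (∀ i, s (i + 1) ≤ s i) ∧ ∃ N, ∀ i, N ≤ i → s i = 0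

/-- `j`-th suffix sum (0-based: `suff s 0` is the total sum `|s|`,
`suff s (j-1)` is the paper's `Σ_j`). -/
noncomputable def suff (s : ℕ → ℕ) (j : ℕ) : ℕ := ∑' i, s (j + i)

/-- `s` is a partition of `n`. -/
noncomputable def IsPartOf (n : ℕ) (s : ℕ → ℕ) : Prop := IsPartition s ∧ suff s 0 = n

/-- Prefix sum of the first `j` parts. -/
def psum (s : ℕ → ℕ) (j : ℕ) : ℕ := ∑ i ∈ Finset.range j, s i

/-- Dominance ordering: `Dom s t` means `s ≥ t`, i.e. every prefix sum of `s`
is at least the corresponding prefix sum of `t`. -/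
def Dom (s t : ℕ → ℕ) : Prop := ∀ j, psum t j ≤ psum s j

/-- `s^{↓(i+1)}`: add one grain on the (0-based) `i`-th column. -/
def incr (s : ℕ → ℕ) (i : ℕ) : ℕ → ℕ := Function.update s i (s i + 1)

/-- Move one grain from column `a` to column `b` (0-based). -/
def moveGrain (s : ℕ → ℕ) (a b : ℕ) : ℕ → ℕ :=
  fun j => if j = a then s a - 1 else if j = b then s b + 1 else s j

/-- `s` has a cliff at (0-based) column `i`: `s_i ≥ s_{i+1} + 2`. -/
def Cliff (s : ℕ → ℕ) (i : ℕ) : Prop := s (i + 1) + 2 ≤ s i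

/-- `s` has a slippery step at (0-based) column `i`, the plateau ending at
(0-based) column `m`:  `s_i - 1 = s_{i+1} = ⋯ = s_m = s_{m+1} + 1` (in 0-based
indices), with `m ≥ i + 1`. -/
def SlipAt (s : ℕ → ℕ) (i m : ℕ) : Prop :=
  i + 1 ≤ m ∧ (∀ j, i + 1 ≤ j → j ≤ m → s j + 1 = s i) ∧ s (m + 1) + 2 = s i

/-- The transition `s →_{i+1} t` of the paper (0-based `i`): a fall from a
cliff at `i`, or a slip from a slippery step at `i` (the grain landing just
after the plateau). -/
def Step (s : ℕ → ℕ) (i : ℕ) (t : ℕ → ℕ) : Prop :=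
  (Cliff s i ∧ t = moveGrain s i (i + 1)) ∨
  (∃ m, SlipAt s i m ∧ t = moveGrain s i (m + 1))

/-- The set of configurations directly reachable from `s`. -/
def dirreach (s : ℕ → ℕ) : Set (ℕ → ℕ) := {t | ∃ i, Step s i t}

/-- `s` has a (slippery, if `l ≥ 2`) plateau of length `l` at `1`:
`s_1 = s_2 = ⋯ = s_l = s_{l+1} + 1`. -/
def SlipperyPlateau1 (s : ℕ → ℕ) (l : ℕ) : Prop :=
  (∀ j, j < l → s j = s 0) ∧ s l + 1 = s 0

/-- `s` has a non-slippery plateau at `1`: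
`s_1 = ⋯ = s_l ≥ s_{l+1} + 2` for some `l ≥ 2`. -/
def NonSlipperyPlateau1 (s : ℕ → ℕ) : Prop :=
  ∃ l, 2 ≤ l ∧ (∀ j, j < l → s j = s 0) ∧ s l + 2 ≤ s 0

/-- `s` has a slippery step at `1`. -/
def SlipperyStep1 (s : ℕ → ℕ) : Prop := ∃ m, SlipAt s 0 m

/-- `s` has a non-slippery step at `1`: `s_1 = s_2 + 1` and
`s_2 = ⋯ = s_m ≥ s_{m+1} + 2` for some `m ≥ 2` (here `m` is 0-based, `≥ 1`). -/
def NonSlipperyStep1 (s : ℕ → ℕ) : Prop :=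
  s 0 = s 1 + 1 ∧ ∃ m, 1 ≤ m ∧ (∀ j, 1 ≤ j → j ≤ m → s j = s 1) ∧ s (m + 1) + 2 ≤ s 1

/-- `c` is the infimum of `a` and `b` in the dominance lattice `L_B(n)`. -/
noncomputable def IsInfOn (n : ℕ) (a b c : ℕ → ℕ) : Prop :=
  IsPartOf n c ∧ Dom a c ∧ Dom b c ∧ ∀ d, IsPartOf n d → Dom a d → Dom b d → Dom c d

/-- `c` is the supremum of `a` and `b` in the dominance lattice `L_B(n)`. -/
noncomputable def IsSupOn (n : ℕ) (a b c : ℕ → ℕ) : Prop :=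
  IsPartOf n c ∧ Dom c a ∧ Dom c b ∧ ∀ d, IsPartOf n d → Dom d a → Dom d b → Dom d c

/-- The order `≥_∞` on the set `P` of all partitions: `GeInf s t` means
`s ≥_∞ t`, i.e. every suffix sum of `s` is at most that of `t`. -/
noncomputable def GeInf (s t : ℕ → ℕ) : Prop := ∀ j, suff s j ≤ suff t j

/-- `c` is the infimum of `a` and `b` in `(P, ≥_∞)`. -/
noncomputable def IsInfP (a b c : ℕ → ℕ) : Prop :=
  IsPartition c ∧ GeInf a c ∧ GeInf b c ∧
    ∀ d, IsPartition d → GeInf a d → GeInf b d → GeInf c d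

/-- `c` is the supremum of `a` and `b` in `(P, ≥_∞)`. -/
noncomputable def IsSupP (a b c : ℕ → ℕ) : Prop :=
  IsPartition c ∧ GeInf c a ∧ GeInf c b ∧
    ∀ d, IsPartition d → GeInf d a → GeInf d b → GeInf d c

/-- The map `π`: delete the first part, `(s_1, s_2, …) ↦ (s_2, …)`. -/
def shift (s : ℕ → ℕ) : ℕ → ℕ := fun i => s (i + 1)

/-!
Compare the transitions of `s` and `s^{↓2}` column by column (paper indices). Beyond
column 2 they coincide, and moving a grain commutes with adding one on column 2. In
`s^{↓2}` columns 1 and 2 are equal, so nothing moves at 1; in `s`, `s_1 = s_2 + 1` rules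
out a cliff at 1, and a slip at 1 would need the plateau `s_2 = ⋯ = s_m` to end with a
drop of exactly 1, whereas the non-slippery step makes it drop by at least 2. At column 2,
`s_3 + 1 ≠ s_2`, so `s` has no slip there and has a cliff iff `s^{↓2}` has one; a slip
of `s^{↓2}` at 2 would be a slip of `s` at 1.
-/

section

variable {s s' t : ℕ → ℕ} {a b c i m : ℕ}

lemma incr_apply_of_ne (h : i ≠ c) : incr s c i = s i :=
  Function.update_of_ne h _ _

lemma incr_apply_self : incr s c c = s c + 1 :=
  Function.update_self _ _ _

lemma incr_moveGrain_comm (h : a ≠ c ∨ 0 < s a) :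
    incr (moveGrain s a b) c = moveGrain (incr s c) a b := by
  funext j
  simp only [incr, moveGrain, Function.update_apply]
  split_ifs <;> subst_vars <;> omega

lemma cliff_congr (h : ∀ j, i ≤ j → s j = s' j) : Cliff s i ↔ Cliff s' i := by
  rw [Cliff, Cliff, h i le_rfl, h (i + 1) (by omega)]

lemma slipAt_congr (h : ∀ j, i ≤ j → s j = s' j) : SlipAt s i m ↔ SlipAt s' i m := by
  refine and_congr_right fun him => ?_
  rw [h i le_rfl, h (m + 1) (by omega)]
  exact and_congr_left' <| forall_congr' fun j =>
    imp_congr_right fun hj => by rw [h j (by omega)]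

lemma SlipAt.apply_succ_add_one (h : SlipAt s i m) : s (i + 1) + 1 = s i :=
  h.2.1 (i + 1) le_rfl h.1

lemma Step.apply_succ_lt (h : Step s i t) : s (i + 1) < s i := by
  rcases h with ⟨hc, -⟩ | ⟨m, hsl, -⟩
  · exact Nat.lt_of_lt_of_le (by omega) hc
  · exact Nat.lt_of_succ_le hsl.apply_succ_add_one.le

lemma step_incr_iff_of_lt (hc : c < i) :
    Step (incr s c) i t ↔ ∃ u, Step s i u ∧ incr u c = t := by
  have hs : ∀ j, i ≤ j → incr s c j = s j := fun j hj => incr_apply_of_ne (by omega)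
  have hcomm : ∀ b, incr (moveGrain s i b) c = moveGrain (incr s c) i b :=
    fun _ => incr_moveGrain_comm (Or.inl (by omega))
  constructor
  · rintro (⟨hcl, rfl⟩ | ⟨m, hsl, rfl⟩)
    · exact ⟨_, Or.inl ⟨(cliff_congr hs).1 hcl, rfl⟩, hcomm _⟩
    · exact ⟨_, Or.inr ⟨m, (slipAt_congr hs).1 hsl, rfl⟩, hcomm _⟩
  · rintro ⟨u, ⟨hcl, rfl⟩ | ⟨m, hsl, rfl⟩, rfl⟩
    · exact Or.inl ⟨(cliff_congr hs).2 hcl, hcomm _⟩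
    · exact Or.inr ⟨m, (slipAt_congr hs).2 hsl, hcomm _⟩

lemma cliff_incr_self_iff (h : s (i + 1) + 1 ≠ s i) : Cliff (incr s i) i ↔ Cliff s i := by
  rw [Cliff, Cliff, incr_apply_self, incr_apply_of_ne (by omega)]
  omega

lemma SlipAt.of_incr_succ (hsl : SlipAt (incr s (i + 1)) (i + 1) m) (hs : s i = s (i + 1) + 1) :
    SlipAt s i m := by
  obtain ⟨him, hplat, hend⟩ := hsl
  rw [incr_apply_self, incr_apply_of_ne (by omega)] at hend
  refine ⟨by omega, fun j hj hjm => ?_, by omega⟩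
  rcases Nat.eq_or_lt_of_le hj with rfl | hj
  · omega
  · have := hplat j hj hjm
    rw [incr_apply_self, incr_apply_of_ne (by omega)] at this
    omega

end

namespace NonSlipperyStep1

variable {s t : ℕ → ℕ} {m : ℕ}

lemma apply_two_add_one_ne (h : NonSlipperyStep1 s) : s 2 + 1 ≠ s 1 := by
  obtain ⟨-, m, hm, hplat, hcl⟩ := h
  rcases Nat.eq_or_lt_of_le hm with rfl | hm
  · simp only [Nat.reduceAdd] at hcl
    omega
  · have := hplat 2 (by omega) hm
    omega

lemma not_slipAt_zero (h : NonSlipperyStep1 s) : ¬ SlipAt s 0 m := by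
  obtain ⟨h01, n, -, hplat, hcl⟩ := h
  rintro ⟨hm, hslip, hend⟩
  rcases lt_trichotomy m n with hmn | rfl | hnm
  · have := hplat (m + 1) (by omega) (by omega)
    omega
  · omega
  · have := hslip (n + 1) (by omega) (by omega)
    omega

lemma not_step_zero (h : NonSlipperyStep1 s) : ¬ Step s 0 t := by
  rintro (⟨hc, -⟩ | ⟨m, hsl, -⟩)
  · have := h.1
    rw [Cliff, zero_add] at hc
    omega
  · exact h.not_slipAt_zero hsl

lemma not_step_incr_zero (h : NonSlipperyStep1 s) : ¬ Step (incr s 1) 0 t := fun hst => by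
  have := hst.apply_succ_lt
  rw [incr_apply_self, incr_apply_of_ne one_ne_zero.symm, h.1] at this
  omega

lemma step_incr_one_iff_one (h : NonSlipperyStep1 s) :
    Step (incr s 1) 1 t ↔ ∃ u, Step s 1 u ∧ incr u 1 = t := by
  have hcomm (hcl : Cliff s 1) :
      incr (moveGrain s 1 (1 + 1)) 1 = moveGrain (incr s 1) 1 (1 + 1) :=
    incr_moveGrain_comm (Or.inr (by rw [Cliff] at hcl; omega))
  have hcliff := cliff_incr_self_iff h.apply_two_add_one_ne
  constructor
  · rintro (⟨hcl, rfl⟩ | ⟨m, hsl, -⟩)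
    · exact ⟨_, Or.inl ⟨hcliff.1 hcl, rfl⟩, hcomm (hcliff.1 hcl)⟩
    · exact absurd (hsl.of_incr_succ h.1) h.not_slipAt_zero
  · rintro ⟨u, ⟨hcl, rfl⟩ | ⟨m, hsl, -⟩, rfl⟩
    · exact Or.inl ⟨hcliff.2 hcl, hcomm hcl⟩
    · exact absurd hsl.apply_succ_add_one h.apply_two_add_one_ne

lemma step_incr_one_iff (h : NonSlipperyStep1 s) (i : ℕ) :
    Step (incr s 1) i t ↔ ∃ u, Step s i u ∧ incr u 1 = t := by
  match i with
  | 0 => exact iff_of_false h.not_step_incr_zero fun ⟨_, hst, _⟩ => h.not_step_zero hst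
  | 1 => exact h.step_incr_one_iff_one
  | i + 2 => exact step_incr_iff_of_lt (by omega)

end NonSlipperyStep1

theorem stmt8_general (s : ℕ → ℕ) (h : NonSlipperyStep1 s) :
    dirreach (incr s 1) = (fun u => incr u 1) '' dirreach s := by
  ext t
  simp only [dirreach, Set.mem_ofPred_eq, Set.mem_image, h.step_incr_one_iff]
  constructor
  · rintro ⟨i, u, hu, rfl⟩
    exact ⟨u, ⟨i, hu⟩, rfl⟩
  · rintro ⟨u, ⟨i, hu⟩, rfl⟩
    exact ⟨i, u, hu, rfl⟩

/-- If `s` has a non-slippery step at `1`, then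
`dirreach(s^{↓2}) = dirreach(s)^{↓2}`. -/
theorem stmt8 (s : ℕ → ℕ) (hs : IsPartition s) (h : NonSlipperyStep1 s) :
    dirreach (incr s 1) = (fun u => incr u 1) '' dirreach s :=
  stmt8_general s h
end

section
/- For each n ≥ 0 let π_n : L_B(n) → P send a partition (s_1, s_2, …, s_k) of n to (s_2, …, s_k). Then the images form an increasing chain: π_n(L_B(n)) ⊆ π_{n+1}(L_B(n+1)) for every n; each image π_n(L_B(n)) is a sublattice of (P, ≥_∞) (closed under inf and sup); and ⋃_{n ≥ 0} π_n(L_B(n)) = P. -/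
/-- The image `π_n(L_B(n)) ⊆ P`. -/
noncomputable def img (n : ℕ) : Set (ℕ → ℕ) := {u | ∃ s, IsPartOf n s ∧ u = shift s}

/-!
Since `n = s_1 + |π s|` and `s_1 ≥ (π s)_1`, the image `π_n(L_B(n))` consists exactly of the
partitions `u` with `|u| + u_1 ≤ n`; this gives the chain and the union at once.

Every antitone, convex, eventually zero `D : ℕ → ℕ` is the suffix-sum function `Σ_j` of a
partition, namely of its successive differences. Hence the pointwise maximum
`max (Σ_j x) (Σ_j y)` is the suffix-sum function of a lower bound of `x` and `y`, so their infimum `z` satisfies `|z| ≤ max (|x|, |y|)`, and `Σ_2 z ≥ Σ_2 x, Σ_2 y` bounds `z_1`. For the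
supremum `z` of `x, y ∈ π_n(L_B(n))` put `m = min (|x|, |y|)` and `k = n - m ≥ x_1, y_1`: the
staircase `Σ_j = m - (j - 1) k` (truncated subtraction) is a common upper bound, which forces
`Σ_2 z ≥ m - k`, while `|z| ≤ m`.
-/

lemma suff_shift (s : ℕ → ℕ) (j : ℕ) : suff (shift s) j = suff s (j + 1) := by
  simp only [suff, shift, Nat.add_right_comm]

section SuffixSums

variable {s : ℕ → ℕ}

lemma suff_eq_zero_of_le {N : ℕ} (hN : ∀ i, N ≤ i → s i = 0) {j : ℕ} (hj : N ≤ j) :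
    suff s j = 0 := by
  simp [suff, hN _ (le_add_right hj)]

lemma suff_eq_add_suff_succ (hs : ∃ N, ∀ i, N ≤ i → s i = 0) (j : ℕ) :
    suff s j = s j + suff s (j + 1) := by
  obtain ⟨N, hN⟩ := hs
  have hsum : Summable fun i => s (j + (i + 1)) :=
    summable_of_ne_finset_zero (s := Finset.range N) fun i hi =>
      hN _ (by simp only [Finset.mem_range, not_lt] at hi; omega)
  rw [suff, suff, tsum_eq_zero_add' (f := fun i => s (j + i)) hsum]
  simp only [add_zero, Nat.add_right_comm j, add_assoc]

lemma IsPartition.suff_succ_le (hs : IsPartition s) (j : ℕ) : suff s (j + 1) ≤ suff s j := by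
  rw [suff_eq_add_suff_succ hs.2 j]
  exact le_add_self

lemma IsPartition.two_mul_suff_succ_le (hs : IsPartition s) (j : ℕ) :
    2 * suff s (j + 1) ≤ suff s j + suff s (j + 2) := by
  have h₀ := suff_eq_add_suff_succ hs.2 j
  have h₁ : suff s (j + 1) = s (j + 1) + suff s (j + 2) := suff_eq_add_suff_succ hs.2 (j + 1)
  have := hs.1 j
  omega

lemma IsPartition.suff_zero_le_suff_add_mul (hs : IsPartition s) (j : ℕ) :
    suff s 0 ≤ suff s j + j * s 0 := by
  induction j with
  | zero => simp
  | succ k ih =>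
    have := suff_eq_add_suff_succ hs.2 k
    have := antitone_nat_of_succ_le hs.1 (Nat.zero_le k)
    rw [add_one_mul]
    omega

theorem exists_isPartition_suff_eq {D : ℕ → ℕ} (hanti : ∀ j, D (j + 1) ≤ D j)
    (hconv : ∀ j, 2 * D (j + 1) ≤ D j + D (j + 2)) (hzero : ∃ N, ∀ j, N ≤ j → D j = 0) :
    ∃ d, IsPartition d ∧ ∀ j, suff d j = D j := by
  obtain ⟨N, hN⟩ := hzero
  have hdzero : ∀ i, N ≤ i → D i - D (i + 1) = 0 := fun i hi => by simp [hN i hi]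
  refine ⟨fun i => D i - D (i + 1), ⟨fun i => ?_, N, hdzero⟩, fun j => ?_⟩
  · show D (i + 1) - D (i + 2) ≤ D i - D (i + 1)
    have := hconv i
    have := hanti (i + 1)
    omega
  · suffices ∀ m j, N ≤ j + m → suff (fun i => D i - D (i + 1)) j = D j from this N j (by omega)
    intro m
    induction m with
    | zero => exact fun j hj => by rw [suff_eq_zero_of_le hdzero (by omega), hN j (by omega)]
    | succ m ih =>
      intro j hj
      rw [suff_eq_add_suff_succ ⟨N, hdzero⟩, ih (j + 1) (by omega)]
      have := hanti j
      omega

end SuffixSums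

def prepend (a : ℕ) (u : ℕ → ℕ) : ℕ → ℕ
  | 0 => a
  | i + 1 => u i

lemma shift_prepend (a : ℕ) (u : ℕ → ℕ) : shift (prepend a u) = u := rfl

lemma IsPartition.prepend {u : ℕ → ℕ} (hu : IsPartition u) {a : ℕ} (ha : u 0 ≤ a) :
    IsPartition (prepend a u) := by
  obtain ⟨hanti, N, hN⟩ := hu
  refine ⟨fun i => ?_, N + 1, fun i hi => ?_⟩
  · cases i with
    | zero => exact ha
    | succ i => exact hanti i
  · obtain ⟨i, rfl⟩ := Nat.exists_eq_add_of_le' (Nat.le_of_add_left_le hi)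
    exact hN i (by omega)

lemma IsPartition.shift {s : ℕ → ℕ} (hs : IsPartition s) : IsPartition (shift s) := by
  obtain ⟨hanti, N, hN⟩ := hs
  exact ⟨fun i => hanti (i + 1), N, fun i hi => hN (i + 1) (by omega)⟩

lemma suff_zero_eq_add_suff_shift {s : ℕ → ℕ} (hs : ∃ N, ∀ i, N ≤ i → s i = 0) :
    suff s 0 = s 0 + suff (shift s) 0 := by
  rw [suff_shift, suff_eq_add_suff_succ hs]

theorem mem_img_iff {n : ℕ} {u : ℕ → ℕ} :
    u ∈ img n ↔ IsPartition u ∧ suff u 0 + u 0 ≤ n := by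
  constructor
  · rintro ⟨s, ⟨hs, rfl⟩, rfl⟩
    have := suff_zero_eq_add_suff_shift hs.2
    have : shift s 0 ≤ s 0 := hs.1 0
    exact ⟨hs.shift, by omega⟩
  · rintro ⟨hu, hle⟩
    have hs := hu.prepend (a := n - suff u 0) (by omega)
    refine ⟨prepend (n - suff u 0) u, ⟨hs, ?_⟩, (shift_prepend _ _).symm⟩
    rw [suff_zero_eq_add_suff_shift hs.2, shift_prepend]
    simp only [prepend]
    omega

theorem img_subset_img_succ (n : ℕ) : img n ⊆ img (n + 1) := fun _ hu =>
  have ⟨hu, hle⟩ := mem_img_iff.mp hu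
  mem_img_iff.mpr ⟨hu, by omega⟩

theorem iUnion_img : ⋃ n, img n = {u | IsPartition u} := by
  ext u
  simp only [Set.mem_iUnion, Set.mem_ofPred_eq]
  exact ⟨fun ⟨_, hu⟩ => (mem_img_iff.mp hu).1, fun hu => ⟨_, mem_img_iff.mpr ⟨hu, le_rfl⟩⟩⟩

theorem IsInfP.mem_img {n : ℕ} {x y z : ℕ → ℕ} (hx : x ∈ img n) (hy : y ∈ img n)
    (h : IsInfP x y z) : z ∈ img n := by
  obtain ⟨hxp, hxn⟩ := mem_img_iff.mp hx
  obtain ⟨hyp, hyn⟩ := mem_img_iff.mp hy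
  obtain ⟨hzp, hxz, hyz, hglb⟩ := h
  obtain ⟨Nx, hNx⟩ := hxp.2
  obtain ⟨Ny, hNy⟩ := hyp.2
  obtain ⟨d, hdp, hd⟩ := exists_isPartition_suff_eq (D := fun j => max (suff x j) (suff y j))
    (fun j => max_le_max (hxp.suff_succ_le j) (hyp.suff_succ_le j))
    (fun j => by
      have := hxp.two_mul_suff_succ_le j
      have := hyp.two_mul_suff_succ_le j
      omega)
    ⟨max Nx Ny, fun j hj => by
      simp [suff_eq_zero_of_le hNx (le_of_max_le_left hj),
        suff_eq_zero_of_le hNy (le_of_max_le_right hj)]⟩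
  have hz0 : suff z 0 ≤ max (suff x 0) (suff y 0) :=
    hd 0 ▸ hglb d hdp (fun j => hd j ▸ le_max_left _ _) (fun j => hd j ▸ le_max_right _ _) 0
  have := hxz 1
  have := hyz 1
  have : suff z 0 = z 0 + suff z 1 := suff_eq_add_suff_succ hzp.2 0
  have : suff x 0 = x 0 + suff x 1 := suff_eq_add_suff_succ hxp.2 0
  have : suff y 0 = y 0 + suff y 1 := suff_eq_add_suff_succ hyp.2 0
  exact mem_img_iff.mpr ⟨hzp, by omega⟩

theorem IsSupP.mem_img {n : ℕ} {x y z : ℕ → ℕ} (hx : x ∈ img n) (hy : y ∈ img n)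
    (h : IsSupP x y z) : z ∈ img n := by
  obtain ⟨hxp, hxn⟩ := mem_img_iff.mp hx
  obtain ⟨hyp, hyn⟩ := mem_img_iff.mp hy
  obtain ⟨hzp, hzx, hzy, hlub⟩ := h
  set m := min (suff x 0) (suff y 0)
  set k := n - m
  have hstair {w : ℕ → ℕ} (hw : IsPartition w) (hm : m ≤ suff w 0) (hk : w 0 ≤ k) (j : ℕ) :
      m - j * k ≤ suff w j := by
    have := hw.suff_zero_le_suff_add_mul j
    have := Nat.mul_le_mul_left j hk
    omega
  have hxk : x 0 ≤ k := by omega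
  have hyk : y 0 ≤ k := by omega
  obtain ⟨Nx, hNx⟩ := hxp.2
  obtain ⟨d, hdp, hd⟩ := exists_isPartition_suff_eq (D := fun j => m - j * k)
    (fun j => by simp only [add_one_mul]; omega)
    (fun j => by simp only [add_mul, one_mul]; omega)
    ⟨Nx, fun j hj => by
      simpa [suff_eq_zero_of_le hNx hj] using hstair hxp (min_le_left _ _) hxk j⟩
  have hz1 : m - k ≤ suff z 1 := by
    simpa [hd] using hlub d hdp (fun j => hd j ▸ hstair hxp (min_le_left _ _) hxk j)
      (fun j => hd j ▸ hstair hyp (min_le_right _ _) hyk j) 1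
  have := hzx 0
  have := hzy 0
  have : suff z 0 = z 0 + suff z 1 := suff_eq_add_suff_succ hzp.2 0
  exact mem_img_iff.mpr ⟨hzp, by omega⟩

/-- The images `π_n(L_B(n))` form an increasing chain of
sublattices of `(P, ≥_∞)` whose union is all of `P`. -/
theorem stmt14 :
    (∀ n, img n ⊆ img (n + 1)) ∧
    (∀ n x y z, x ∈ img n → y ∈ img n → IsInfP x y z → z ∈ img n) ∧
    (∀ n x y z, x ∈ img n → y ∈ img n → IsSupP x y z → z ∈ img n) ∧
    (⋃ n, img n) = {u | IsPartition u} :=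
  ⟨img_subset_img_succ, fun _ _ _ _ hx hy h => h.mem_img hx hy,
    fun _ _ _ _ hx hy h => h.mem_img hx hy, iUnion_img⟩
end
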